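/- arXiv:2201.05947 — 2 statements merged into one kernel-verified Lean document; each statement's English description precedes it below -/
import Mathlib

section
/- Let μ be Lebesgue measure on [0,1], let A ⊆ [0,1] be measurable, let p, n, i be positive integers with p > n + 2i, and let D be uniform on the dyadics of order p (i.e., uniform on {j/2^p : 0 ≤ j ≤ 2^p, j odd}) and U uniform on [0,1], independent of D. Define X = D + (U − D)/(2^n 4^i). Then |P(X ∈ A) − μ(A)| ≤ 2^{-(p−1−n−2i)} + 1/(2^{n+2i} − 1). -/
/-!
Put `M = 2 ^ n * 4 ^ i` and `N = 2 ^ (p - 1)`. Given `D = d`, the variable `X` is uniform, with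
density `M`, on an interval of length `1 / M` starting at `(1 - 1 / M) d`. The starting points for
consecutive odd numerators are `2 (1 - 1 / M) / 2 ^ p` apart, so every point lies in at most
`N / (M - 1) + 1` of the `N` intervals, and hence
`P(X ∈ B) ≤ (M / N) (N / (M - 1) + 1) λ(B) = (1 + 1 / (M - 1) + M / N) λ(B)` for `B ⊆ [0, 1]`.
As `X ∈ [0, 1]` almost surely, this upper bound applied to both `A` and `[0, 1] \ A` yields the
two-sided estimate.
-/

open MeasureTheory ENNReal
open Set
open scoped Finset

theorem card_le_of_forall_odd_of_sub_le (S : Finset ℕ) (hodd : ∀ j ∈ S, Odd j) (L : ℕ)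
    (hgap : ∀ j ∈ S, ∀ k ∈ S, k - j ≤ 2 * L) : #S ≤ L + 1 := by
  rcases S.eq_empty_or_nonempty with rfl | hS
  · simp
  set a := S.min' hS
  calc #S ≤ #((Finset.range (L + 1)).image fun m => a + 2 * m) := by
        refine Finset.card_le_card fun j hj => Finset.mem_image.2 ⟨(j - a) / 2, ?_, ?_⟩
        · have := hgap a (S.min'_mem hS) j hj
          rw [Finset.mem_range]; omega
        · have := S.min'_le j hj
          obtain ⟨b, rfl⟩ := hodd j hj
          obtain ⟨c, hc⟩ := hodd a (S.min'_mem hS)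
          omega
    _ ≤ L + 1 := Finset.card_image_le.trans (Finset.card_range _).le

theorem card_filter_mem_Icc_le {s h : ℝ} (hs : 0 < s) (hh : 0 ≤ h) (J : Finset ℕ)
    (hJ : ∀ j ∈ J, Odd j) (x : ℝ) :
    (#(J.filter fun j : ℕ => x ∈ Icc (s * j) (s * j + h)) : ℝ) ≤ h / (2 * s) + 1 := by
  have hcard : #(J.filter fun j : ℕ => x ∈ Icc (s * j) (s * j + h)) ≤ ⌊h / (2 * s)⌋₊ + 1 := by
    refine card_le_of_forall_odd_of_sub_le _ (fun j hj => hJ j (Finset.mem_filter.1 hj).1) _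
      fun j hj k hk => ?_
    obtain ⟨hjJ, -, hxj⟩ := Finset.mem_filter.1 hj
    obtain ⟨hkJ, hxk, -⟩ := Finset.mem_filter.1 hk
    rcases le_or_gt k j with hkj | hjk
    · omega
    obtain ⟨t, ht⟩ := Nat.Odd.sub_odd (hJ k hkJ) (hJ j hjJ)
    have hreal : (k : ℝ) - j = 2 * t := by
      rw [← Nat.cast_sub hjk.le, ht]; push_cast; ring
    have : (t : ℝ) ≤ h / (2 * s) := by
      rw [le_div_iff₀ (by positivity)]
      nlinarith
    have := Nat.le_floor this
    omega
  calc (#(J.filter fun j : ℕ => x ∈ Icc (s * j) (s * j + h)) : ℝ) ≤ (⌊h / (2 * s)⌋₊ : ℝ) + 1 := by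
        exact_mod_cast hcard
    _ ≤ h / (2 * s) + 1 := by gcongr; exact Nat.floor_le (by positivity)

theorem sum_measure_inter_le_of_card_le {α ι : Type*} [MeasurableSpace α] (μ : Measure α)
    (J : Finset ι) {I : ι → Set α} [∀ x, DecidablePred fun j => x ∈ I j]
    (hI : ∀ j, MeasurableSet (I j)) {K : ℝ≥0∞} (hK : ∀ x, (#{j ∈ J | x ∈ I j} : ℝ≥0∞) ≤ K) (B : Set α) :
    ∑ j ∈ J, μ (B ∩ I j) ≤ K * μ B := by
  calc ∑ j ∈ J, μ (B ∩ I j) = ∑ j ∈ J, ∫⁻ x in B, (I j).indicator 1 x ∂μ := by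
        refine Finset.sum_congr rfl fun j _ => ?_
        rw [lintegral_indicator_one (hI j), Measure.restrict_apply (hI j), Set.inter_comm]
    _ = ∫⁻ x in B, ∑ j ∈ J, (I j).indicator 1 x ∂μ :=
        (lintegral_finsetSum _ fun j _ => measurable_one.indicator (hI j)).symm
    _ ≤ ∫⁻ _ in B, K ∂μ := lintegral_mono fun x => by
        simpa only [indicator_apply, Pi.one_apply, Finset.sum_boole] using hK x
    _ = K * μ B := by rw [setLIntegral_const]

theorem abs_measureReal_sub_le_of_forall_le_mul {α : Type*} [MeasurableSpace α]
    {μ ν : Measure α} {S : Set α} (hS : MeasurableSet S) (hμS : μ S = 1) (hνS : ν S = 1)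
    {ε : ℝ} (hε : 0 ≤ ε) (hle : ∀ B ⊆ S, MeasurableSet B → ν B ≤ ENNReal.ofReal (1 + ε) * μ B)
    {A : Set α} (hA : MeasurableSet A) (hAS : A ⊆ S) :
    |ν.real A - μ.real A| ≤ ε := by
  have hfin : ∀ ρ : Measure α, ρ S = 1 → ∀ B ⊆ S, ρ B ≠ ⊤ := fun ρ hρ B hB =>
    ne_top_of_le_ne_top (hρ ▸ one_ne_top) (measure_mono hB)
  have hle' : ∀ B ⊆ S, MeasurableSet B → ν.real B ≤ μ.real B + ε := fun B hBS hB => by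
    have hμB : μ.real B ≤ 1 := by
      simpa [measureReal_def, hμS] using measureReal_mono hBS (hfin μ hμS S subset_rfl)
    calc ν.real B ≤ (1 + ε) * μ.real B := by
          rw [measureReal_def, measureReal_def, ← toReal_ofReal (by linarith : 0 ≤ 1 + ε),
            ← toReal_mul]
          exact toReal_mono (mul_ne_top ofReal_ne_top (hfin μ hμS B hBS)) (hle B hBS hB)
      _ ≤ μ.real B + ε := by nlinarith
  have hsplit : ∀ ρ : Measure α, ρ S = 1 → ρ.real A + ρ.real (S \ A) = 1 := fun ρ hρ => by
    rw [measureReal_add_sdiff hA (hfin ρ hρ A hAS) (hfin ρ hρ S subset_rfl),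
      union_eq_self_of_subset_left hAS, measureReal_def, hρ, toReal_one]
  have hupper := hle' A hAS hA
  have hlower := hle' (S \ A) sdiff_subset (hS.diff hA)
  have hμsplit := hsplit μ hμS
  have hνsplit := hsplit ν hνS
  rw [abs_sub_le_iff]
  constructor <;> linarith

theorem volume_restrict_Icc_preimage_affine {M : ℝ} (hM : 0 < M) (d : ℝ) {B : Set ℝ}
    (hB : MeasurableSet B) :
    volume.restrict (Icc 0 1) ((fun u => d + (u - d) / M) ⁻¹' B) =
      ENNReal.ofReal M * volume (B ∩ Icc ((1 - M⁻¹) * d) ((1 - M⁻¹) * d + M⁻¹)) := by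
  set a := (1 - M⁻¹) * d
  have hg : (fun u => d + (u - d) / M) = (fun y => a + y) ∘ fun u => M⁻¹ * u := by
    ext u; simp only [Function.comp, a]; field_simp; ring
  have hIcc : (fun u => d + (u - d) / M) ⁻¹' Icc a (a + M⁻¹) = Icc 0 1 := by
    rw [hg, preimage_comp, preimage_const_add_Icc, preimage_const_mul_Icc₀ _ _ (inv_pos.2 hM)]
    congr 1 <;> field_simp <;> ring
  rw [Measure.restrict_apply ((by fun_prop : Measurable fun u => d + (u - d) / M) hB), ← hIcc,
    ← preimage_inter, hg, preimage_comp, Real.volume_preimage_mul_left (inv_ne_zero hM.ne'),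
    measure_preimage_add, inv_inv, abs_of_pos hM]

theorem measure_preimage_eq_smul_sum_of_map_eq_sum_dirac {Ω α β γ ι : Type*}
    [MeasurableSpace Ω] [MeasurableSpace α] [MeasurableSpace β] [MeasurableSpace γ]
    {P : Measure Ω} [IsFiniteMeasure P] {D : Ω → α} {U : Ω → β} (hD : Measurable D)
    (hU : Measurable U) (hindep : ProbabilityTheory.IndepFun D U P) {c : ℝ≥0∞} {J : Finset ι}
    {d : ι → α} (hDlaw : P.map D = c • ∑ j ∈ J, Measure.dirac (d j)) {f : α → β → γ}
    (hf : Measurable (Function.uncurry f)) {B : Set γ} (hB : MeasurableSet B) :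
    P ((fun ω => f (D ω) (U ω)) ⁻¹' B) = c * ∑ j ∈ J, P.map U (f (d j) ⁻¹' B) := by
  have hpair := (ProbabilityTheory.indepFun_iff_map_prod_eq_prod_map_map hD.aemeasurable
    hU.aemeasurable).1 hindep
  change P ((fun ω => (D ω, U ω)) ⁻¹' (Function.uncurry f ⁻¹' B)) = _
  rw [← Measure.map_apply (hD.prodMk hU) (hf hB), hpair, Measure.prod_apply (hf hB), hDlaw,
    lintegral_smul_measure, lintegral_finsetSum_measure]
  congr 1
  refine Finset.sum_congr rfl fun j _ => ?_
  rw [lintegral_dirac' _ (measurable_measure_prodMk_left (hf hB))]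
  rfl

/-- The `j`-th interval is the image of `[0, 1]` under `u ↦ d + (u - d) / M`, `d = j / 2 ^ p`. -/
noncomputable def dyadicMixture (p : ℕ) (M : ℝ) : Measure ℝ :=
  (2 ^ (p - 1) : ℝ≥0∞)⁻¹ • ∑ j ∈ (Finset.range (2 ^ p + 1)).filter Odd,
    ENNReal.ofReal M •
      volume.restrict (Icc ((1 - M⁻¹) * (j / 2 ^ p)) ((1 - M⁻¹) * (j / 2 ^ p) + M⁻¹))

theorem map_eq_dyadicMixture {Ω : Type*} [MeasurableSpace Ω] {P : Measure Ω}
    [IsFiniteMeasure P] {p : ℕ} {D U : Ω → ℝ} (hD : Measurable D) (hU : Measurable U)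
    (hindep : ProbabilityTheory.IndepFun D U P)
    (hDlaw : P.map D = ((2 : ℝ≥0∞) ^ (p - 1))⁻¹ •
      ∑ j ∈ (Finset.range (2 ^ p + 1)).filter (fun j => Odd j), Measure.dirac ((j : ℝ) / 2 ^ p))
    (hUlaw : P.map U = volume.restrict (Icc 0 1)) {M : ℝ} (hM : 0 < M) :
    P.map (fun ω => D ω + (U ω - D ω) / M) = dyadicMixture p M := by
  ext B hB
  rw [Measure.map_apply (by fun_prop) hB,
    measure_preimage_eq_smul_sum_of_map_eq_sum_dirac hD hU hindep
      (d := fun j : ℕ => (j : ℝ) / 2 ^ p) hDlaw (f := fun d u => d + (u - d) / M) (by fun_prop) hB, hUlaw, dyadicMixture,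
    Measure.smul_apply, Measure.finsetSum_apply, smul_eq_mul]
  congr 1
  refine Finset.sum_congr rfl fun j _ => ?_
  rw [volume_restrict_Icc_preimage_affine hM _ hB, Measure.smul_apply, smul_eq_mul,
    Measure.restrict_apply hB]

theorem dyadicMixture_compl_Icc (p : ℕ) {M : ℝ} (hM : 1 ≤ M) :
    dyadicMixture p M (Icc 0 1)ᶜ = 0 := by
  rw [dyadicMixture, Measure.smul_apply, Measure.finsetSum_apply, smul_eq_mul]
  refine mul_eq_zero_of_right _ (Finset.sum_eq_zero fun j hj => ?_)
  have hj : (j : ℝ) / 2 ^ p ∈ Icc 0 1 := by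
    refine ⟨by positivity, div_le_one_of_le₀ ?_ (by positivity)⟩
    exact_mod_cast Nat.lt_succ_iff.1 (Finset.mem_range.1 (Finset.mem_filter.1 hj).1)
  have hMinv : M⁻¹ ∈ Icc 0 1 := ⟨by positivity, inv_le_one_of_one_le₀ hM⟩
  have hsub : Icc ((1 - M⁻¹) * (j / 2 ^ p)) ((1 - M⁻¹) * (j / 2 ^ p) + M⁻¹) ⊆ Icc 0 1 :=
    Icc_subset_Icc (mul_nonneg (by linarith [hMinv.2]) hj.1) (by nlinarith [hj.2, hMinv.2])
  rw [Measure.smul_apply, Measure.restrict_apply measurableSet_Icc.compl, smul_eq_mul,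
    (disjoint_compl_left.mono_right hsub).inter_eq, measure_empty, mul_zero]

theorem dyadicMixture_le {p : ℕ} (hp : 0 < p) {M : ℝ} (hM : 1 < M) (B : Set ℝ) :
    dyadicMixture p M B ≤ ENNReal.ofReal (1 + (1 / (M - 1) + M / 2 ^ (p - 1))) * volume B := by
  set s : ℝ := (1 - M⁻¹) / 2 ^ p
  have hs : 0 < s := div_pos (sub_pos.2 (inv_lt_one_of_one_lt₀ hM)) (by positivity)
  have hI : ∀ j : ℕ, (1 - M⁻¹) * ((j : ℝ) / 2 ^ p) = s * j := fun j => by ring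
  have hcount : ∀ x, (#((Finset.range (2 ^ p + 1)).filter Odd |>.filter fun j : ℕ =>
      x ∈ Icc (s * j) (s * j + M⁻¹)) : ℝ≥0∞) ≤ ENNReal.ofReal (M⁻¹ / (2 * s) + 1) := fun x => by
    rw [← ENNReal.ofReal_natCast]
    exact ENNReal.ofReal_le_ofReal (card_filter_mem_Icc_le hs (by positivity) _
      (fun j hj => (Finset.mem_filter.1 hj).2) x)
  have h2p : (2 : ℝ) ^ p = 2 * 2 ^ (p - 1) := by rw [← pow_succ', Nat.sub_add_cancel hp]
  have hconst : (2 ^ (p - 1) : ℝ≥0∞)⁻¹ * ENNReal.ofReal M * ENNReal.ofReal (M⁻¹ / (2 * s) + 1) =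
      ENNReal.ofReal (1 + (1 / (M - 1) + M / 2 ^ (p - 1))) := by
    rw [← ENNReal.ofReal_ofNat, ← ENNReal.ofReal_pow zero_le_two,
      ← ENNReal.ofReal_inv_of_pos (by positivity), ← ENNReal.ofReal_mul (by positivity),
      ← ENNReal.ofReal_mul (by positivity)]
    congr 1
    simp only [s, h2p]
    have : M - 1 ≠ 0 := (sub_pos.2 hM).ne'
    field_simp
    ring
  calc dyadicMixture p M B
      = (2 ^ (p - 1) : ℝ≥0∞)⁻¹ * ENNReal.ofReal M * ∑ j ∈ (Finset.range (2 ^ p + 1)).filter Odd,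
          volume (B ∩ Icc (s * j) (s * j + M⁻¹)) := by
        simp only [dyadicMixture, Measure.smul_apply, Measure.finsetSum_apply, smul_eq_mul,
          Measure.restrict_apply' measurableSet_Icc, hI, Finset.mul_sum, mul_assoc]
    _ ≤ (2 ^ (p - 1) : ℝ≥0∞)⁻¹ * ENNReal.ofReal M *
          (ENNReal.ofReal (M⁻¹ / (2 * s) + 1) * volume B) := by
        gcongr
        exact sum_measure_inter_le_of_card_le _ _ (fun _ => measurableSet_Icc) hcount B
    _ = ENNReal.ofReal (1 + (1 / (M - 1) + M / 2 ^ (p - 1))) * volume B := by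
        rw [← mul_assoc, hconst]

theorem stmt_6_general {Ω : Type*} [MeasurableSpace Ω] (P : Measure Ω) [IsProbabilityMeasure P]
    (p n i : ℕ) (hn : 0 < n) (hp : n + 2 * i < p)
    (A : Set ℝ) (hA : MeasurableSet A) (hAsub : A ⊆ Set.Icc 0 1)
    (D U : Ω → ℝ) (hD : Measurable D) (hU : Measurable U)
    (hindep : ProbabilityTheory.IndepFun D U P)
    (hDlaw : Measure.map D P =
      ((2 : ℝ≥0∞) ^ (p - 1))⁻¹ •
        ∑ j ∈ (Finset.range (2 ^ p + 1)).filter (fun j => Odd j),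
          Measure.dirac ((j : ℝ) / 2 ^ p))
    (hUlaw : Measure.map U P = volume.restrict (Set.Icc 0 1)) :
    |(P {ω | D ω + (U ω - D ω) / (2 ^ n * 4 ^ i) ∈ A}).toReal - (volume A).toReal|
      ≤ 1 / 2 ^ (p - 1 - n - 2 * i) + 1 / (2 ^ (n + 2 * i) - 1) := by
  set M : ℝ := 2 ^ n * 4 ^ i
  have hMpow : M = 2 ^ (n + 2 * i) := by rw [pow_add, pow_mul]; norm_num [M]
  have hM : 1 < M := by
    rw [hMpow]
    exact one_lt_pow₀ _root_.one_lt_two (by positivity)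
  set X := fun ω => D ω + (U ω - D ω) / M
  have hlaw : P.map X = dyadicMixture p M :=
    map_eq_dyadicMixture hD hU hindep hDlaw hUlaw (zero_lt_one.trans hM)
  have hX : Measurable X := by fun_prop
  have := Measure.isProbabilityMeasure_map (μ := P) hX.aemeasurable
  have hS : P.map X (Icc 0 1) = 1 := by
    rw [← prob_compl_eq_zero_iff measurableSet_Icc, hlaw, dyadicMixture_compl_Icc p hM.le]
  have hε : 1 / (M - 1) + M / 2 ^ (p - 1) =
      1 / 2 ^ (p - 1 - n - 2 * i) + 1 / (2 ^ (n + 2 * i) - 1) := by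
    have hpow : (2 : ℝ) ^ (p - 1) = 2 ^ (p - 1 - n - 2 * i) * 2 ^ (n + 2 * i) := by
      rw [← pow_add]; congr 1; omega
    rw [hMpow, hpow, div_mul_cancel_right₀ (by positivity), add_comm, one_div (2 ^ _ : ℝ)]
  have key := abs_measureReal_sub_le_of_forall_le_mul measurableSet_Icc (by simp) hS
    (add_nonneg (one_div_nonneg.2 (sub_pos.2 hM).le) (by positivity))
    (fun B _ _ => hlaw ▸ dyadicMixture_le (by omega) hM B) hA hAsub
  rwa [measureReal_def, measureReal_def, Measure.map_apply hX hA, hε] at key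

/-- If `D` is uniform on the dyadics of order `p` (odd numerator, denominator
`2^p`), `U` is uniform on `[0,1]` and independent of `D`, `p > n + 2i`, and
`X = D + (U − D)/(2^n 4^i)`, then `|P(X ∈ A) − μ(A)| ≤ 2^{-(p−1−n−2i)} + 1/(2^{n+2i}−1)`
for every measurable `A ⊆ [0,1]`, where `μ` is Lebesgue measure. -/
theorem stmt_6 {Ω : Type*} [MeasurableSpace Ω] (P : Measure Ω) [IsProbabilityMeasure P]
    (p n i : ℕ) (hn : 0 < n) (hi : 0 < i) (hp : n + 2 * i < p)
    (A : Set ℝ) (hA : MeasurableSet A) (hAsub : A ⊆ Set.Icc 0 1)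
    (D U : Ω → ℝ) (hD : Measurable D) (hU : Measurable U)
    (hindep : ProbabilityTheory.IndepFun D U P)
    (hDlaw : Measure.map D P =
      ((2 : ℝ≥0∞) ^ (p - 1))⁻¹ •
        ∑ j ∈ (Finset.range (2 ^ p + 1)).filter (fun j => Odd j),
          Measure.dirac ((j : ℝ) / 2 ^ p))
    (hUlaw : Measure.map U P = volume.restrict (Set.Icc 0 1)) :
    |(P {ω | D ω + (U ω - D ω) / (2 ^ n * 4 ^ i) ∈ A}).toReal - (volume A).toReal|
      ≤ 1 / 2 ^ (p - 1 - n - 2 * i) + 1 / (2 ^ (n + 2 * i) - 1) :=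
  stmt_6_general P p n i hn hp A hA hAsub D U hD hU hindep hDlaw hUlaw
end

section
/- Let (X,ρ) be a metric space and consider two 'nearest-neighbor paths' p_d → p_{d−1} → ... → p_0 and q_f → q_{f−1} → ... → q_0 of times (with p_0 < q_0, all times distinct) in a process where at each time the parent is the nearest available previous point, and both path endpoints p_d, q_f remain available throughout. Then, with v(0) = max{i ≤ d : p_i < q_0}, one has ρ(x_{p_{v(0)}}, x_{q_0}) ≤ 2^{f+d}·ρ(x_{p_d}, x_{q_f}) and ρ(x_{p_{v(0)}}, x_{p_d}) ≤ 2^{f+d}·ρ(x_{p_d}, x_{q_f}). -/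
/-!
Walk both paths back from `(p_d, q_f)` in decreasing time order, keeping a pair `(p_i, q_j)`
such that the next points `p_{i+1}` and `q_{j+1}` both come after `p_i` and `q_j`. The earlier
of `p_{i+1}, q_{j+1}` sees the current point of the other path when it picks its parent, so by
the nearest-neighbour property and the triangle inequality each step back at most doubles the
distance within the pair.
The walk reaches `(p_{v(0)}, q_0)` after `(d - v(0)) + f` steps, and the distance from `p_i` to
`p_d` is controlled along the way by the same doubling.
-/

open Set

theorem dist_le_two_mul_of_dist_le {X : Type*} [PseudoMetricSpace X] {a a' b : X}
    (h : dist a' a ≤ dist a' b) : dist a b ≤ 2 * dist a' b := by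
  linarith [dist_triangle a a' b, dist_comm a a']

theorem dist_le_two_mul_of_parent_left {X : Type*} [PseudoMetricSpace X] {a a' b c : X} {r : ℝ}
    (hparent : dist a' a ≤ dist a' b) (hb : dist a' b ≤ r) (hc : dist a' c ≤ r) :
    dist a b ≤ 2 * r ∧ dist a c ≤ 2 * r :=
  ⟨by linarith [dist_le_two_mul_of_dist_le hparent],
    by linarith [dist_triangle a a' c, dist_comm a a']⟩

theorem dist_le_two_mul_of_parent_right {X : Type*} [PseudoMetricSpace X] {a b b' c : X} {r : ℝ}
    (hparent : dist b' b ≤ dist b' a) (hb : dist a b' ≤ r) (hc : dist a c ≤ r) :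
    dist a b ≤ 2 * r ∧ dist a c ≤ 2 * r :=
  ⟨by linarith [dist_le_two_mul_of_dist_le hparent, dist_comm a b, dist_comm a b'],
    by linarith [dist_nonneg (x := a) (y := c)]⟩

theorem Nat.findGreatest_lt_eq_of_lt_of_lt_succ {p : ℕ → ℕ} {d i t : ℕ}
    (hp : StrictMonoOn p (Iic d)) (hi : i ≤ d) (hlt : p i < t) (hnext : i < d → t < p (i + 1)) :
    Nat.findGreatest (fun k => p k < t) d = i := by
  refine Nat.findGreatest_eq_iff.mpr ⟨hi, fun _ => hlt, fun k hik hkd => not_lt.mpr ?_⟩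
  have hsucc : p (i + 1) ≤ p k :=
    hp.monotoneOn (mem_Iic.mpr (by omega)) (mem_Iic.mpr hkd) (by omega)
  exact ((hnext (by omega)).trans_le hsucc).le

section Descent

variable {X : Type*} [PseudoMetricSpace X] {x : ℕ → X} {d f i₀ : ℕ} {p q : ℕ → ℕ}

theorem dist_le_two_pow_along_merged_paths
    (hp : StrictMonoOn p (Iic d)) (hq : StrictMonoOn q (Iic f))
    (hdistinct : ∀ i ≤ d, ∀ j ≤ f, p i ≠ q j)
    (hnn_p : ∀ i, i₀ + 1 ≤ i → i ≤ d → dist (x (p i)) (x (p (i - 1))) ≤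
      dist (x (p i)) (x (q (Nat.findGreatest (fun j => q j < p i) f))))
    (hnn_q : ∀ j, 1 ≤ j → j ≤ f → dist (x (q j)) (x (q (j - 1))) ≤
      dist (x (q j)) (x (p (Nat.findGreatest (fun i => p i < q j) d))))
    (i j : ℕ) (hi : i ≤ d) (hj : j ≤ f) (hi₀ : i₀ ≤ i)
    (hp_next : i < d → q j < p (i + 1)) (hq_next : j < f → p i < q (j + 1)) :
    dist (x (p i)) (x (q j)) ≤ 2 ^ ((d - i) + (f - j)) * dist (x (p d)) (x (q f)) ∧
    dist (x (p i)) (x (p d)) ≤ 2 ^ ((d - i) + (f - j)) * dist (x (p d)) (x (q f)) := by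
  have hp_succ : ∀ k, k + 1 ≤ d → p k < p (k + 1) := fun k hk =>
    hp (mem_Iic.mpr (by omega)) (mem_Iic.mpr hk) (by omega)
  have hq_succ : ∀ k, k + 1 ≤ f → q k < q (k + 1) := fun k hk =>
    hq (mem_Iic.mpr (by omega)) (mem_Iic.mpr hk) (by omega)
  by_cases hdone : i = d ∧ j = f
  · obtain ⟨rfl, rfl⟩ := hdone
    simp
  by_cases hnext : i < d ∧ (j < f → p (i + 1) < q (j + 1))
  · obtain ⟨hid, hnext⟩ := hnext
    obtain ⟨ih_pq, ih_pp⟩ := dist_le_two_pow_along_merged_paths hp hq hdistinct hnn_p hnn_q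
      (i + 1) j hid hj (by omega) (fun h => (hp_next hid).trans (hp_succ _ h)) hnext
    have hu : Nat.findGreatest (fun k => q k < p (i + 1)) f = j :=
      Nat.findGreatest_lt_eq_of_lt_of_lt_succ hq hj (hp_next hid) hnext
    have hparent : dist (x (p (i + 1))) (x (p i)) ≤ dist (x (p (i + 1))) (x (q j)) := by
      simpa [hu] using hnn_p (i + 1) (by omega) hid
    rw [show (d - i) + (f - j) = ((d - (i + 1)) + (f - j)) + 1 by omega, pow_succ', mul_assoc]
    exact dist_le_two_mul_of_parent_left hparent ih_pq ih_pp
  · have hjf : j < f := by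
      by_contra hjf
      have hid : ¬ i < d := fun hid => hnext ⟨hid, fun h => absurd h hjf⟩
      exact hdone ⟨by omega, by omega⟩
    have hq_before : i < d → q (j + 1) < p (i + 1) := fun hid =>
      lt_of_le_of_ne (not_lt.mp fun h => hnext ⟨hid, fun _ => h⟩)
        (hdistinct (i + 1) hid (j + 1) hjf).symm
    obtain ⟨ih_pq, ih_pp⟩ := dist_le_two_pow_along_merged_paths hp hq hdistinct hnn_p hnn_q
      i (j + 1) hi hjf hi₀ hq_before (fun h => (hq_next hjf).trans (hq_succ _ h))
    have hv : Nat.findGreatest (fun k => p k < q (j + 1)) d = i :=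
      Nat.findGreatest_lt_eq_of_lt_of_lt_succ hp hi (hq_next hjf) hq_before
    have hparent : dist (x (q (j + 1))) (x (q j)) ≤ dist (x (q (j + 1))) (x (p i)) := by
      simpa [hv] using hnn_q (j + 1) (by omega) hjf
    rw [show (d - i) + (f - j) = ((d - i) + (f - (j + 1))) + 1 by omega, pow_succ', mul_assoc]
    exact dist_le_two_mul_of_parent_right hparent ih_pq ih_pp
termination_by (d - i) + (f - j)
decreasing_by all_goals omega

end Descent

/-- path recursion, Lemma 5: For two nearest-neighbor paths
`p_d → ... → p_0` and `q_f → ... → q_0` with `p_0 < q_0`, where at each step the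
parent is at least as close as the relevant point of the other path that is currently
available (with `v(j) = max{i ≤ d : p_i < q_j}` and `u(i) = max{j ≤ f : q_j < p_i}`),
one has `ρ(x_{p_{v(0)}}, x_{q_0}) ≤ 2^{f+d} ρ(x_{p_d}, x_{q_f})` and
`ρ(x_{p_{v(0)}}, x_{p_d}) ≤ 2^{f+d} ρ(x_{p_d}, x_{q_f})`. -/
theorem stmt_15 {X : Type*} [MetricSpace X] (x : ℕ → X)
    (d f : ℕ) (p q : ℕ → ℕ)
    (hp_mono : ∀ i, 1 ≤ i → i ≤ d → p (i - 1) < p i)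
    (hq_mono : ∀ j, 1 ≤ j → j ≤ f → q (j - 1) < q j)
    (hpq0 : p 0 < q 0)
    (hdistinct : ∀ i ≤ d, ∀ j ≤ f, p i ≠ q j)
    (v u : ℕ → ℕ)
    (hv : ∀ j, v j = Nat.findGreatest (fun i => p i < q j) d)
    (hu : ∀ i, u i = Nat.findGreatest (fun j => q j < p i) f)
    (hnn_p : ∀ i, v 0 + 1 ≤ i → i ≤ d →
      dist (x (p i)) (x (p (i - 1))) ≤ dist (x (p i)) (x (q (u i))))
    (hnn_q : ∀ j, 1 ≤ j → j ≤ f →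
      dist (x (q j)) (x (q (j - 1))) ≤ dist (x (q j)) (x (p (v j)))) :
    dist (x (p (v 0))) (x (q 0)) ≤ 2 ^ (f + d) * dist (x (p d)) (x (q f)) ∧
    dist (x (p (v 0))) (x (p d)) ≤ 2 ^ (f + d) * dist (x (p d)) (x (q f)) := by
  obtain rfl := funext hv
  obtain rfl := funext hu
  have hp : StrictMonoOn p (Iic d) :=
    strictMonoOn_Iic_of_lt_succ fun m hm => hp_mono (m + 1) (by omega) hm
  have hq : StrictMonoOn q (Iic f) :=
    strictMonoOn_Iic_of_lt_succ fun m hm => hq_mono (m + 1) (by omega) hm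
  set i₀ := Nat.findGreatest (fun i => p i < q 0) d
  have hi₀ : i₀ ≤ d := Nat.findGreatest_le d
  have hp_i₀ : p i₀ < q 0 := Nat.findGreatest_spec (P := fun i => p i < q 0) d.zero_le hpq0
  have hp_next : i₀ < d → q 0 < p (i₀ + 1) := fun h =>
    lt_of_le_of_ne
      (not_lt.mp (Nat.findGreatest_is_greatest (P := fun i => p i < q 0) (lt_add_one i₀) h))
      (hdistinct _ h 0 f.zero_le).symm
  have hq_next : 0 < f → p i₀ < q 1 := fun h =>
    hp_i₀.trans (hq (mem_Iic.mpr f.zero_le) (mem_Iic.mpr h) one_pos)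
  obtain ⟨h_pq, h_pp⟩ := dist_le_two_pow_along_merged_paths hp hq hdistinct hnn_p hnn_q
    i₀ 0 hi₀ f.zero_le le_rfl hp_next hq_next
  have hpow : (2 : ℝ) ^ ((d - i₀) + (f - 0)) ≤ 2 ^ (f + d) :=
    pow_le_pow_right₀ one_le_two (by omega)
  have hD : 0 ≤ dist (x (p d)) (x (q f)) := dist_nonneg
  exact ⟨h_pq.trans (mul_le_mul_of_nonneg_right hpow hD),
    h_pp.trans (mul_le_mul_of_nonneg_right hpow hD)⟩
end
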